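/- Let T₁ = (S₁,Σ₁,κ₁) be an STS, T₂ = (S₂,2^{S₂},κ₂) a denumerable Markov chain (S₂ countable), and α : S₁ → S₂ measurable, with T₂ an α-abstraction of T₁. Assume: (1) there is a finite set A₂ = {s₁,…,s_n} ⊆ S₂ such that A₂ is an attractor for T₂ and α⁻¹(A₂) is an attractor for T₁; and (2) for every 1 ≤ i ≤ n and every B ⊆ S₂, there exist p > 0 and k ∈ ℕ such that either Prob^{T₁}_μ(F≤k α⁻¹(B)) ≥ p for every probability measure μ on S₁ with μ(α⁻¹({s_i})) = 1, or Prob^{T₁}_μ(F α⁻¹(B)) = 0 for every such μ. Then T₁ is decisive w.r.t. every α-closed set α⁻¹(B) (B ⊆ S₂) from every initial probability measure on S₁. -/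

import Mathlib

open MeasureTheory ProbabilityTheory ENNReal Filter Topology

namespace STS

variable {S : Type*} [MeasurableSpace S]

/-- Probability of the cylinder `Cyl(A 0, …, A n)` for the Markov chain with kernel `κ`
and initial distribution `μ`. -/
noncomputable def cylProb (κ : Kernel S S) : ℕ → Measure S → (ℕ → Set S) → ℝ≥0∞
  | 0, μ, A => μ (A 0)
  | n + 1, μ, A => ∫⁻ s in A 0, cylProb κ n (κ s) (fun i => A (i + 1)) ∂μ

/-- `P` assigns to each initial (probability) distribution the path measure (on `ℕ → S`,
with the product σ-algebra) of the time-homogeneous Markov chain with transition kernel `κ`,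
as given by the Ionescu–Tulcea construction: it is the unique probability measure giving
cylinders their prescribed probabilities. -/
def IsPathMeasure (κ : Kernel S S) (P : Measure S → Measure (ℕ → S)) : Prop :=
  ∀ μ : Measure S, IsProbabilityMeasure μ →
    IsProbabilityMeasure (P μ) ∧
    ∀ (n : ℕ) (A : ℕ → Set S), (∀ i, MeasurableSet (A i)) →
      P μ {ρ | ∀ i ≤ n, ρ i ∈ A i} = cylProb κ n μ A

/-- The path event `F B`: eventually reach `B`. -/
def evF (B : Set S) : Set (ℕ → S) := {ρ | ∃ k, ρ k ∈ B}

/-- The path event `F≤n B`. -/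
def evFle (n : ℕ) (B : Set S) : Set (ℕ → S) := {ρ | ∃ k ≤ n, ρ k ∈ B}

/-- The path event `F≥p B`. -/
def evFge (p : ℕ) (B : Set S) : Set (ℕ → S) := {ρ | ∃ k, p ≤ k ∧ ρ k ∈ B}

/-- The path event `GF B`: visit `B` infinitely often. -/
def evGF (B : Set S) : Set (ℕ → S) := {ρ | ∀ n, ∃ k, n ≤ k ∧ ρ k ∈ B}

/-- The path event `FG B`: eventually stay in `B` forever. -/
def evFG (B : Set S) : Set (ℕ → S) := {ρ | ∃ n, ∀ k, n ≤ k → ρ k ∈ B}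

/-- The until event `B' U B`. -/
def evU (B' B : Set S) : Set (ℕ → S) := {ρ | ∃ k, ρ k ∈ B ∧ ∀ j < k, ρ j ∈ B'}

/-- The bounded until event `B' U≤n B`. -/
def evUle (n : ℕ) (B' B : Set S) : Set (ℕ → S) := {ρ | ∃ k ≤ n, ρ k ∈ B ∧ ∀ j < k, ρ j ∈ B'}

/-- The avoid-set `B̃` of `B`: states from which `B` is reached with probability `0`. -/
def avoid (P : Measure S → Measure (ℕ → S)) (B : Set S) : Set S :=
  {s | P (Measure.dirac s) (evF B) = 0}

/-- `T` is decisive w.r.t. `B` from `μ`. -/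
def Decisive (P : Measure S → Measure (ℕ → S)) (μ : Measure S) (B : Set S) : Prop :=
  P μ (evF B ∪ evF (avoid P B)) = 1

/-- `T` is strongly decisive w.r.t. `B` from `μ`. -/
def StronglyDecisive (P : Measure S → Measure (ℕ → S)) (μ : Measure S) (B : Set S) : Prop :=
  P μ (evGF B ∪ evF (avoid P B)) = 1

/-- `T` is persistently decisive w.r.t. `B` from `μ`. -/
def PersistentlyDecisive (P : Measure S → Measure (ℕ → S)) (μ : Measure S) (B : Set S) : Prop :=
  ∀ p : ℕ, P μ (evFge p B ∪ evFge p (avoid P B)) = 1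

/-- `PreProb(B)`: measurable sets `B'` from which `B` is reached in one step with positive
probability, whatever the initial distribution concentrated on `B'`. -/
def PreProb (P : Measure S → Measure (ℕ → S)) (B : Set S) : Set (Set S) :=
  {B' | MeasurableSet B' ∧ ∀ μ' : Measure S, IsProbabilityMeasure μ' → μ' B' = 1 →
    0 < P μ' {ρ | ρ 0 ∈ B' ∧ ρ 1 ∈ B}}

/-- `T` is fair w.r.t. `B` from `μ`. -/
def Fair (P : Measure S → Measure (ℕ → S)) (μ : Measure S) (B : Set S) : Prop :=
  ∀ B' ∈ PreProb P B, 0 < P μ (evGF B') →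
    P μ (evGF B ∩ evGF B') = P μ (evGF B')

/-- The one-step measure transformer `Ω_T`. -/
noncomputable def Omega (κ : Kernel S S) (μ : Measure S) : Measure S :=
  μ.bind (fun s => κ s)

/-- Two measures are qualitatively equivalent if they have the same null (measurable) sets. -/
def QualEquiv {T : Type*} [MeasurableSpace T] (μ ν : Measure T) : Prop :=
  ∀ A : Set T, MeasurableSet A → (μ A = 0 ↔ ν A = 0)

/-- `T₂ = (S₂,κ₂)` is an `α`-abstraction of `T₁ = (S₁,κ₁)`. -/
def IsAbstraction {S₁ S₂ : Type*} [MeasurableSpace S₁] [MeasurableSpace S₂]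
    (κ₁ : Kernel S₁ S₁) (κ₂ : Kernel S₂ S₂) (α : S₁ → S₂) : Prop :=
  ∀ μ : Measure S₁, IsProbabilityMeasure μ →
    QualEquiv (Measure.map α (Omega κ₁ μ)) (Omega κ₂ (Measure.map α μ))

/-!
Fix `B`, let `N ⊆ A₂` consist of the states from which `α⁻¹(B)` is almost surely never reached,
and put `G = α⁻¹(B ∪ N)`. Every state of `α⁻¹(N)` lies in the avoid-set, so it suffices to show
that `G` is an attractor. Since `A₂` is finite, there are `p > 0` and `K` such that `G` is reached
within `K` steps with probability at least `p` from every state of `α⁻¹(A₂) \ G`. Let `c` be the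
supremum, over all initial distributions, of the probability of never visiting `G`. The Markov
property at time `K + 1` bounds this probability by `(1 - p) c` from the states of `α⁻¹(A₂)`, and
splitting paths at their first visit to the attractor `α⁻¹(A₂)` extends the bound to every initial
distribution. Hence `c ≤ (1 - p) c`, so `c = 0`.
-/

def shift (ρ : ℕ → S) : ℕ → S := fun i => ρ (i + 1)

@[fun_prop]
lemma measurable_shift : Measurable (shift (S := S)) :=
  measurable_pi_lambda _ fun i => measurable_pi_apply (i + 1)

omit [MeasurableSpace S] in
lemma shift_iterate_apply (n : ℕ) (ρ : ℕ → S) (i : ℕ) : shift^[n] ρ i = ρ (i + n) := by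
  induction n generalizing ρ with
  | zero => rfl
  | succ n ih => rw [Function.iterate_succ_apply, ih]; rfl

variable (S) in
def prefixCylinders : Set (Set (ℕ → S)) :=
  {t | ∃ (n : ℕ) (A : ℕ → Set S), (∀ i, MeasurableSet (A i)) ∧ t = {ρ | ∀ i ≤ n, ρ i ∈ A i}}

lemma measurableSet_evF {B : Set S} (hB : MeasurableSet B) : MeasurableSet (evF B) := by
  unfold evF; measurability

lemma measurableSet_evFle (n : ℕ) {B : Set S} (hB : MeasurableSet B) :
    MeasurableSet (evFle n B) := by
  unfold evFle; measurability

lemma measurableSet_forall_lt_mem (n : ℕ) {A : Set S} (hA : MeasurableSet A) :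
    MeasurableSet {ρ : ℕ → S | ∀ i < n, ρ i ∈ A} := by
  measurability

lemma generateFrom_prefixCylinders :
    MeasurableSpace.generateFrom (prefixCylinders S) = MeasurableSpace.pi := by
  refine le_antisymm (MeasurableSpace.generateFrom_le ?_) (iSup_le fun i => ?_)
  · rintro _ ⟨n, A, hA, rfl⟩
    measurability
  · rintro _ ⟨C, hC, rfl⟩
    classical
    refine MeasurableSpace.measurableSet_generateFrom
      ⟨i, Function.update (fun _ => Set.univ) i C, fun j => ?_, ?_⟩
    · by_cases h : j = i <;> simp [h, hC]
    · ext ρ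
      simp only [Set.mem_preimage, Set.mem_ofPred_eq]
      refine ⟨fun h j _ => ?_, fun h => by simpa using h i le_rfl⟩
      by_cases hj : j = i
      · subst hj; simpa using h
      · simp [hj]

lemma isPiSystem_prefixCylinders : IsPiSystem (prefixCylinders S) := by
  rintro _ ⟨n, A, hA, rfl⟩ _ ⟨m, B, hB, rfl⟩ -
  refine ⟨max n m, fun i => {x | (i ≤ n → x ∈ A i) ∧ (i ≤ m → x ∈ B i)}, fun i => ?_, ?_⟩
  · measurability
  · ext ρ
    simp only [Set.mem_inter_iff, Set.mem_ofPred_eq]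
    refine ⟨fun h i _ => ⟨h.1 i, h.2 i⟩, fun h => ⟨fun i hi => ?_, fun i hi => ?_⟩⟩
    · exact (h i (le_max_of_le_left hi)).1 hi
    · exact (h i (le_max_of_le_right hi)).2 hi

lemma measurable_cylProb (κ : Kernel S S) (n : ℕ) {A : ℕ → Set S}
    (hA : ∀ i, MeasurableSet (A i)) : Measurable fun μ : Measure S => cylProb κ n μ A := by
  induction n generalizing A with
  | zero => exact Measure.measurable_coe (hA 0)
  | succ n ih =>
    have hf : Measurable fun s => cylProb κ n (κ s) (fun i => A (i + 1)) :=
      (ih fun i => hA (i + 1)).comp κ.measurable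
    simp only [cylProb, ← lintegral_indicator (hA 0)]
    exact Measure.measurable_lintegral (hf.indicator (hA 0))

lemma cylProb_eq_lintegral_dirac (κ : Kernel S S) (n : ℕ) {A : ℕ → Set S}
    (hA : ∀ i, MeasurableSet (A i)) (μ : Measure S) :
    cylProb κ n μ A = ∫⁻ s, cylProb κ n (Measure.dirac s) A ∂μ := by
  cases n with
  | zero =>
    simp only [cylProb, Measure.dirac_apply' _ (hA 0), lintegral_indicator (hA 0)]
    simp
  | succ n =>
    have hf : Measurable fun s => cylProb κ n (κ s) (fun i => A (i + 1)) :=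
      (measurable_cylProb κ n fun i => hA (i + 1)).comp κ.measurable
    classical
    simp only [cylProb, setLIntegral_dirac' hf (hA 0), ← lintegral_indicator (hA 0),
      Set.indicator_apply]

section PathMeasure

variable {κ : Kernel S S} {P : Measure S → Measure (ℕ → S)}

lemma IsPathMeasure.isProbabilityMeasure (hP : IsPathMeasure κ P) (μ : Measure S)
    [IsProbabilityMeasure μ] : IsProbabilityMeasure (P μ) :=
  (hP μ ‹_›).1

lemma IsPathMeasure.apply_prefix (hP : IsPathMeasure κ P) (μ : Measure S)
    [IsProbabilityMeasure μ] (n : ℕ) {A : ℕ → Set S} (hA : ∀ i, MeasurableSet (A i)) :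
    P μ {ρ | ∀ i ≤ n, ρ i ∈ A i} = cylProb κ n μ A :=
  (hP μ ‹_›).2 n A hA

lemma IsPathMeasure.apply_zero_mem (hP : IsPathMeasure κ P) (μ : Measure S)
    [IsProbabilityMeasure μ] {A : Set S} (hA : MeasurableSet A) :
    P μ {ρ | ρ 0 ∈ A} = μ A := by
  simpa [cylProb] using hP.apply_prefix μ 0 (A := fun _ => A) fun _ => hA

lemma IsPathMeasure.measurable_dirac (hP : IsPathMeasure κ P) :
    Measurable fun s => P (Measure.dirac s) := by
  have := fun s => hP.isProbabilityMeasure (Measure.dirac s)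
  refine .measure_of_isPiSystem_of_isProbabilityMeasure generateFrom_prefixCylinders.symm
    isPiSystem_prefixCylinders ?_
  rintro _ ⟨n, A, hA, rfl⟩
  simp only [hP.apply_prefix _ n hA]
  exact (measurable_cylProb κ n hA).comp Measure.measurable_dirac

lemma IsPathMeasure.eq_bind (hP : IsPathMeasure κ P) (μ : Measure S) [IsProbabilityMeasure μ] :
    P μ = μ.bind fun s => P (Measure.dirac s) := by
  have := hP.isProbabilityMeasure μ
  refine ext_of_generate_finite _ generateFrom_prefixCylinders.symm isPiSystem_prefixCylinders
    ?_ ?_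
  · rintro _ ⟨n, A, hA, rfl⟩
    rw [Measure.bind_apply (by measurability) hP.measurable_dirac.aemeasurable,
      hP.apply_prefix μ n hA, cylProb_eq_lintegral_dirac κ n hA]
    exact lintegral_congr fun s => (hP.apply_prefix _ n hA).symm
  · have := fun s => hP.isProbabilityMeasure (Measure.dirac s)
    simp [Measure.bind_apply MeasurableSet.univ hP.measurable_dirac.aemeasurable]

lemma IsPathMeasure.measurable_kernel [IsMarkovKernel κ] (hP : IsPathMeasure κ P) :
    Measurable fun s => P (κ s) := by
  rw [show (fun s => P (κ s)) = fun s => (κ s).bind _ from funext fun s => hP.eq_bind (κ s)]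
  exact (Measure.measurable_bind' hP.measurable_dirac).comp κ.measurable

lemma IsPathMeasure.map_shift_restrict [IsMarkovKernel κ] (hP : IsPathMeasure κ P)
    (μ : Measure S) [IsProbabilityMeasure μ] {A : Set S} (hA : MeasurableSet A) :
    ((P μ).restrict {ρ | ρ 0 ∈ A}).map shift = (μ.restrict A).bind fun s => P (κ s) := by
  have := hP.isProbabilityMeasure μ
  have hκ := hP.measurable_kernel.aemeasurable (μ := μ.restrict A)
  refine ext_of_generate_finite _ generateFrom_prefixCylinders.symm isPiSystem_prefixCylinders
    ?_ ?_
  · rintro _ ⟨n, B, hB, rfl⟩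
    let D : ℕ → Set S := fun i => if i = 0 then A else B (i - 1)
    have hD : ∀ i, MeasurableSet (D i) := fun i => by
      unfold D; split_ifs
      exacts [hA, hB _]
    have hset : shift ⁻¹' {σ | ∀ i ≤ n, σ i ∈ B i} ∩ {ρ | ρ 0 ∈ A} =
        {ρ | ∀ i ≤ n + 1, ρ i ∈ D i} := by
      ext ρ
      simp only [Set.mem_inter_iff, Set.mem_preimage, Set.mem_ofPred_eq, ← Nat.lt_succ_iff,
        Nat.forall_lt_succ_left (n := n + 1), D, shift]
      simp [and_comm]
    rw [Measure.map_apply measurable_shift (by measurability),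
      Measure.restrict_apply (by measurability), hset, hP.apply_prefix μ _ hD,
      Measure.bind_apply (by measurability) hκ]
    refine lintegral_congr fun s => ?_
    rw [hP.apply_prefix _ n hB]
    simp [D]
  · rw [Measure.map_apply measurable_shift .univ, Measure.bind_apply .univ hκ]
    have := fun s => hP.isProbabilityMeasure (κ s)
    simp [hP.apply_zero_mem μ hA]

lemma IsPathMeasure.setLIntegral_comp_shift [IsMarkovKernel κ] (hP : IsPathMeasure κ P)
    (μ : Measure S) [IsProbabilityMeasure μ] {A : Set S} (hA : MeasurableSet A)
    {T : Set (ℕ → S)} (hT : MeasurableSet T) {g : (ℕ → S) → ℝ≥0∞} (hg : Measurable g) :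
    ∫⁻ ρ in {ρ | ρ 0 ∈ A} ∩ shift ⁻¹' T, g (shift ρ) ∂P μ =
      ∫⁻ s in A, ∫⁻ σ in T, g σ ∂P (κ s) ∂μ := by
  calc ∫⁻ ρ in {ρ | ρ 0 ∈ A} ∩ shift ⁻¹' T, g (shift ρ) ∂P μ
      = ∫⁻ ρ in {ρ | ρ 0 ∈ A}, T.indicator g (shift ρ) ∂P μ := by
        simp_rw [← Set.indicator_comp_right shift]
        rw [lintegral_indicator (measurable_shift hT), Measure.restrict_restrict
          (measurable_shift hT), Set.inter_comm]
        rfl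
    _ = ∫⁻ s in A, ∫⁻ σ, T.indicator g σ ∂P (κ s) ∂μ := by
        rw [← lintegral_map (hg.indicator hT) measurable_shift, hP.map_shift_restrict μ hA,
          Measure.lintegral_bind hP.measurable_kernel.aemeasurable (hg.indicator hT).aemeasurable]
    _ = ∫⁻ s in A, ∫⁻ σ in T, g σ ∂P (κ s) ∂μ := by
        simp_rw [lintegral_indicator hT]

lemma IsPathMeasure.markov_property [IsMarkovKernel κ] (hP : IsPathMeasure κ P) (n : ℕ)
    (μ : Measure S) [IsProbabilityMeasure μ] {A : Set S} (hA : MeasurableSet A)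
    {E : Set (ℕ → S)} (hE : MeasurableSet E) :
    P μ ({ρ | ∀ i < n, ρ i ∈ A} ∩ shift^[n] ⁻¹' E) =
      ∫⁻ ρ in {ρ | ∀ i < n, ρ i ∈ A}, P (Measure.dirac (ρ n)) E ∂P μ := by
  have hf : Measurable fun x => P (Measure.dirac x) E :=
    (Measure.measurable_coe hE).comp hP.measurable_dirac
  induction n generalizing μ with
  | zero =>
    have hmap : (P μ).map (fun ρ => ρ 0) = μ := by
      ext B hB
      rw [Measure.map_apply (measurable_pi_apply 0) hB]
      exact hP.apply_zero_mem μ hB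
    have huniv : {ρ : ℕ → S | ∀ i < 0, ρ i ∈ A} = Set.univ := by ext; simp
    rw [huniv, Set.univ_inter, Measure.restrict_univ, Function.iterate_zero, Set.preimage_id,
      ← lintegral_map hf (measurable_pi_apply 0), hmap, hP.eq_bind μ,
      Measure.bind_apply hE hP.measurable_dirac.aemeasurable]
  | succ n ih =>
    have hW := measurableSet_forall_lt_mem n hA
    have hsplit : {ρ : ℕ → S | ∀ i < n + 1, ρ i ∈ A} =
        {ρ | ρ 0 ∈ A} ∩ shift ⁻¹' {σ | ∀ i < n, σ i ∈ A} := by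
      ext ρ
      simp only [Set.mem_ofPred_eq, Set.mem_inter_iff, Set.mem_preimage,
        Nat.forall_lt_succ_left, shift]
    calc P μ ({ρ | ∀ i < n + 1, ρ i ∈ A} ∩ shift^[n + 1] ⁻¹' E)
        = ∫⁻ ρ in {ρ | ρ 0 ∈ A} ∩ shift ⁻¹' ({σ | ∀ i < n, σ i ∈ A} ∩ shift^[n] ⁻¹' E),
            1 ∂P μ := by
          rw [setLIntegral_one, hsplit, Function.iterate_succ, Set.preimage_comp,
            Set.preimage_inter, Set.inter_assoc]
      _ = ∫⁻ s in A, ∫⁻ σ in {σ | ∀ i < n, σ i ∈ A}, P (Measure.dirac (σ n)) E ∂P (κ s) ∂μ := by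
          rw [hP.setLIntegral_comp_shift μ hA (hW.inter (measurable_shift.iterate n hE))
            measurable_const]
          simp_rw [setLIntegral_one, ih]
      _ = ∫⁻ ρ in {ρ | ∀ i < n + 1, ρ i ∈ A}, P (Measure.dirac (ρ (n + 1))) E ∂P μ := by
          rw [hsplit]
          exact (hP.setLIntegral_comp_shift μ hA hW (hf.comp (measurable_pi_apply n))).symm

omit [MeasurableSpace S] in
lemma compl_evF_eq_inter_shift_iterate (n : ℕ) (G : Set S) :
    (evF G)ᶜ = {ρ | ∀ i < n, ρ i ∈ Gᶜ} ∩ shift^[n] ⁻¹' (evF G)ᶜ := by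
  ext ρ
  simp only [evF, Set.mem_compl_iff, Set.mem_ofPred_eq, not_exists, Set.mem_inter_iff,
    Set.mem_preimage, shift_iterate_apply]
  refine ⟨fun h => ⟨fun i _ => h i, fun k => h (k + n)⟩, fun h j => ?_⟩
  rcases lt_or_ge j n with hj | hj
  · exact h.1 j hj
  · simpa [Nat.sub_add_cancel hj] using h.2 (j - n)

omit [MeasurableSpace S] in
lemma compl_evFle (n : ℕ) (G : Set S) : (evFle n G)ᶜ = {ρ | ∀ i < n + 1, ρ i ∈ Gᶜ} := by
  ext ρ
  simp [evFle]

omit [MeasurableSpace S] in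
lemma compl_evF_subset_firstVisit (R G : Set S) :
    (evF G)ᶜ ⊆ (evF R)ᶜ ∪
      ⋃ n, {ρ | ∀ i < n, ρ i ∈ Rᶜ} ∩ shift^[n] ⁻¹' ({σ | σ 0 ∈ R} ∩ (evF G)ᶜ) := by
  intro ρ hρ
  classical
  by_cases hρR : ∃ k, ρ k ∈ R
  · refine Or.inr (Set.mem_iUnion.2 ⟨Nat.find hρR, fun i hi => Nat.find_min hρR hi, ?_, ?_⟩)
    · simpa [shift_iterate_apply] using Nat.find_spec hρR
    · exact ((compl_evF_eq_inter_shift_iterate (Nat.find hρR) G).subset hρ).2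
  · exact Or.inl hρR

omit [MeasurableSpace S] in
lemma pairwise_disjoint_firstVisit (R : Set S) :
    Pairwise (Function.onFun Disjoint fun n => {ρ : ℕ → S | ∀ i < n, ρ i ∈ Rᶜ} ∩ {ρ | ρ n ∈ R}) :=
  (pairwise_disjoint_on _).2 fun m _ hmn =>
    Set.disjoint_left.2 fun _ hm hn => hn.1 m hmn hm.2

lemma IsPathMeasure.measure_compl_evF_le_of_dirac_le [IsMarkovKernel κ] (hP : IsPathMeasure κ P)
    {R G : Set S} (hR : MeasurableSet R) (hG : MeasurableSet G) (μ : Measure S)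
    [IsProbabilityMeasure μ] (hμR : P μ (evF R) = 1) {q : ℝ≥0∞}
    (hq : ∀ t ∈ R, P (Measure.dirac t) (evF G)ᶜ ≤ q) : P μ (evF G)ᶜ ≤ q := by
  have := hP.isProbabilityMeasure μ
  let W : ℕ → Set (ℕ → S) := fun n => {ρ | ∀ i < n, ρ i ∈ Rᶜ}
  let E : Set (ℕ → S) := {σ | σ 0 ∈ R} ∩ (evF G)ᶜ
  have hE : MeasurableSet E := (measurable_pi_apply 0 hR).inter (measurableSet_evF hG).compl
  have hfirst : ∀ n, MeasurableSet (W n ∩ {ρ | ρ n ∈ R}) := fun n =>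
    (measurableSet_forall_lt_mem n hR.compl).inter (measurable_pi_apply n hR)
  have hE_le : ∀ x, P (Measure.dirac x) E ≤ R.indicator (fun _ => q) x := by
    intro x
    have := hP.isProbabilityMeasure (Measure.dirac x)
    by_cases hx : x ∈ R
    · simpa [hx] using (measure_mono Set.inter_subset_right).trans (hq x hx)
    · refine (measure_mono Set.inter_subset_left).trans ?_
      rw [hP.apply_zero_mem _ hR, Measure.dirac_apply' x hR, Set.indicator_of_notMem hx,
        Set.indicator_of_notMem hx]
  have hpiece : ∀ n, P μ (W n ∩ shift^[n] ⁻¹' E) ≤ q * P μ (W n ∩ {ρ | ρ n ∈ R}) := by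
    intro n
    calc P μ (W n ∩ shift^[n] ⁻¹' E)
        = ∫⁻ ρ in W n, P (Measure.dirac (ρ n)) E ∂P μ := hP.markov_property n μ hR.compl hE
      _ ≤ ∫⁻ ρ in W n, ((fun ρ => ρ n) ⁻¹' R).indicator (fun _ => q) ρ ∂P μ :=
          lintegral_mono fun ρ => hE_le (ρ n)
      _ = q * P μ (W n ∩ {ρ | ρ n ∈ R}) := by
          rw [lintegral_indicator_const (measurable_pi_apply n hR),
            Measure.restrict_apply (measurable_pi_apply n hR), Set.inter_comm]
          rfl
  calc P μ (evF G)ᶜ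
      ≤ P μ (evF R)ᶜ + ∑' n, P μ (W n ∩ shift^[n] ⁻¹' E) :=
        (measure_mono (compl_evF_subset_firstVisit R G)).trans <| (measure_union_le _ _).trans <|
          add_le_add_right (measure_iUnion_le _) _
    _ ≤ 0 + ∑' n, q * P μ (W n ∩ {ρ | ρ n ∈ R}) := by
        gcongr with n
        · exact ((prob_compl_eq_zero_iff (measurableSet_evF hR)).2 hμR).le
        · exact hpiece n
    _ = q * P μ (⋃ n, W n ∩ {ρ | ρ n ∈ R}) := by
        rw [zero_add, ENNReal.tsum_mul_left, measure_iUnion (pairwise_disjoint_firstVisit R) hfirst]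
    _ ≤ q := mul_le_of_le_one_right' prob_le_one

lemma IsPathMeasure.apply_dirac_compl_evF_of_mem (hP : IsPathMeasure κ P) {G : Set S}
    (hG : MeasurableSet G) {t : S} (ht : t ∈ G) : P (Measure.dirac t) (evF G)ᶜ = 0 := by
  refine le_antisymm ?_ bot_le
  calc P (Measure.dirac t) (evF G)ᶜ ≤ P (Measure.dirac t) {ρ | ρ 0 ∈ Gᶜ} :=
        measure_mono fun ρ hρ h0 => hρ ⟨0, h0⟩
    _ = 0 := by
        rw [hP.apply_zero_mem _ hG.compl, Measure.dirac_apply' t hG.compl,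
          Set.indicator_of_notMem (not_not_intro ht)]

lemma IsPathMeasure.measure_evF_eq_one_of_uniform_reach [IsMarkovKernel κ] (hP : IsPathMeasure κ P)
    {R G : Set S} (hR : MeasurableSet R) (hG : MeasurableSet G)
    (hRattr : ∀ μ : Measure S, IsProbabilityMeasure μ → P μ (evF R) = 1)
    {p : ℝ≥0∞} (hp : 0 < p) (K : ℕ) (hK : ∀ t ∈ R \ G, p ≤ P (Measure.dirac t) (evFle K G))
    (μ : Measure S) [IsProbabilityMeasure μ] : P μ (evF G) = 1 := by
  let c := ⨆ (ν : Measure S) (_ : IsProbabilityMeasure ν), P ν (evF G)ᶜ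
  have hle_c : ∀ ν : Measure S, IsProbabilityMeasure ν → P ν (evF G)ᶜ ≤ c := fun ν hν =>
    le_iSup₂ (f := fun (ν : Measure S) (_ : IsProbabilityMeasure ν) => P ν (evF G)ᶜ) ν hν
  have hc1 : c ≤ 1 := iSup₂_le fun ν _ => by
    have := hP.isProbabilityMeasure ν
    exact prob_le_one
  have hdirac : ∀ t ∈ R, P (Measure.dirac t) (evF G)ᶜ ≤ (1 - p) * c := by
    intro t ht
    have := hP.isProbabilityMeasure (Measure.dirac t)
    by_cases htG : t ∈ G
    · exact (hP.apply_dirac_compl_evF_of_mem hG htG).trans_le bot_le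
    calc P (Measure.dirac t) (evF G)ᶜ
        = ∫⁻ ρ in (evFle K G)ᶜ, P (Measure.dirac (ρ (K + 1))) (evF G)ᶜ ∂P (Measure.dirac t) := by
          rw [compl_evFle, ← hP.markov_property _ _ hG.compl (measurableSet_evF hG).compl,
            ← compl_evF_eq_inter_shift_iterate]
      _ ≤ ∫⁻ _ in (evFle K G)ᶜ, c ∂P (Measure.dirac t) :=
          lintegral_mono fun ρ => hle_c _ inferInstance
      _ = (1 - P (Measure.dirac t) (evFle K G)) * c := by
          rw [setLIntegral_const, prob_compl_eq_one_sub (measurableSet_evFle K hG), mul_comm]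
      _ ≤ (1 - p) * c := by
          gcongr
          exact hK t ⟨ht, htG⟩
  have hc : c ≤ (1 - p) * c :=
    iSup₂_le fun ν _ => hP.measure_compl_evF_le_of_dirac_le hR hG ν (hRattr ν ‹_›) hdirac
  have hc0 : c = 0 := by
    by_contra hc0
    refine (ENNReal.mul_lt_mul_left hc0 (ne_top_of_le_ne_top one_ne_top hc1)
      (ENNReal.sub_lt_self one_ne_top one_ne_zero hp.ne')).not_ge ?_
    rwa [one_mul]
  have := hP.isProbabilityMeasure μ
  exact (prob_compl_eq_zero_iff (measurableSet_evF hG)).1 (le_zero_iff.1 (hc0 ▸ hle_c μ ‹_›))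

end PathMeasure

omit [MeasurableSpace S] in
lemma evF_union (B C : Set S) : evF (B ∪ C) = evF B ∪ evF C := by
  ext ρ
  simp [evF, exists_or]

omit [MeasurableSpace S] in
lemma evF_mono {B C : Set S} (h : B ⊆ C) : evF B ⊆ evF C :=
  fun _ ⟨k, hk⟩ => ⟨k, h hk⟩

omit [MeasurableSpace S] in
lemma evFle_mono {m n : ℕ} {B C : Set S} (hmn : m ≤ n) (h : B ⊆ C) : evFle m B ⊆ evFle n C :=
  fun _ ⟨k, hk, hkB⟩ => ⟨k, hk.trans hmn, h hkB⟩

lemma decisive_of_measure_evF_union_eq_one {P : Measure S → Measure (ℕ → S)} {μ : Measure S}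
    [IsProbabilityMeasure (P μ)] {B B' : Set S} (hB' : B' ⊆ avoid P B)
    (h : P μ (evF (B ∪ B')) = 1) : Decisive P μ B :=
  le_antisymm prob_le_one <| h.symm.trans_le <| measure_mono <| by
    rw [evF_union]
    exact Set.union_subset_union_right _ (evF_mono hB')

omit [MeasurableSpace S] in
lemma _root_.Set.Finite.exists_uniform_bound {ι : Type*} {s : Set ι} (hs : s.Finite)
    {Q : ι → ℝ≥0∞ → ℕ → Prop} (hQ : ∀ i p p' k k', p' ≤ p → k ≤ k' → Q i p k → Q i p' k')
    (h : ∀ i ∈ s, ∃ p > 0, ∃ k, Q i p k) : ∃ p > 0, ∃ k, ∀ i ∈ s, Q i p k := by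
  induction s, hs using Set.Finite.induction_on with
  | empty => exact ⟨1, one_pos, 0, by simp⟩
  | @insert a s _ _ ih =>
    obtain ⟨p, hp, k, hk⟩ := ih fun i hi => h i (Set.mem_insert_of_mem a hi)
    obtain ⟨pa, hpa, ka, hka⟩ := h a (Set.mem_insert a s)
    refine ⟨min p pa, lt_min hp hpa, max k ka, ?_⟩
    rintro i (rfl | hi)
    · exact hQ _ _ _ _ _ (min_le_right _ _) (le_max_right _ _) hka
    · exact hQ _ _ _ _ _ (min_le_left _ _) (le_max_left _ _) (hk i hi)

theorem statement_11_general {S₁ S₂ : Type*} [MeasurableSpace S₁] [MeasurableSpace S₂]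
    [Countable S₂] [MeasurableSingletonClass S₂]
    (κ₁ : Kernel S₁ S₁) [IsMarkovKernel κ₁]
    (P₁ : Measure S₁ → Measure (ℕ → S₁)) (hP₁ : IsPathMeasure κ₁ P₁)
    (α : S₁ → S₂) (hα : Measurable α)
    (A₂ : Set S₂) (hA₂fin : A₂.Finite)
    (hA₁attr : ∀ μ : Measure S₁, IsProbabilityMeasure μ → P₁ μ (evF (α ⁻¹' A₂)) = 1)
    (hbound : ∀ s ∈ A₂, ∀ B : Set S₂, ∃ p : ℝ≥0∞, 0 < p ∧ ∃ k : ℕ,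
      (∀ μ : Measure S₁, IsProbabilityMeasure μ → μ (α ⁻¹' {s}) = 1 →
        p ≤ P₁ μ (evFle k (α ⁻¹' B))) ∨
      (∀ μ : Measure S₁, IsProbabilityMeasure μ → μ (α ⁻¹' {s}) = 1 →
        P₁ μ (evF (α ⁻¹' B)) = 0)) :
    ∀ B : Set S₂, ∀ μ : Measure S₁, IsProbabilityMeasure μ →
      Decisive P₁ μ (α ⁻¹' B) := by
  intro B μ hμ
  have hmeas (C : Set S₂) : MeasurableSet (α ⁻¹' C) := hα (Set.to_countable C).measurableSet
  let N : Set S₂ := {s ∈ A₂ | ∀ ν : Measure S₁, IsProbabilityMeasure ν → ν (α ⁻¹' {s}) = 1 →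
    P₁ ν (evF (α ⁻¹' B)) = 0}
  have hN : α ⁻¹' N ⊆ avoid P₁ (α ⁻¹' B) := fun t ht =>
    ht.2 _ inferInstance (Measure.dirac_apply_of_mem rfl)
  obtain ⟨p, hp, K, hK⟩ : ∃ p > 0, ∃ K, ∀ s ∈ A₂ \ N, ∀ t ∈ α ⁻¹' {s},
      p ≤ P₁ (Measure.dirac t) (evFle K (α ⁻¹' B)) := by
    refine hA₂fin.sdiff.exists_uniform_bound (fun s p p' k k' hpp' hkk' h t ht =>
      hpp'.trans ((h t ht).trans (measure_mono (evFle_mono hkk' subset_rfl)))) ?_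
    rintro s ⟨hs, hsN⟩
    obtain ⟨p, hp, k, hk | hk⟩ := hbound s hs B
    · exact ⟨p, hp, k, fun t ht => hk _ inferInstance (Measure.dirac_apply_of_mem ht)⟩
    · exact absurd ⟨hs, hk⟩ hsN
  have := hP₁.isProbabilityMeasure μ
  refine decisive_of_measure_evF_union_eq_one hN ?_
  rw [← Set.preimage_union]
  refine hP₁.measure_evF_eq_one_of_uniform_reach (hmeas A₂) (hmeas _) hA₁attr hp K
    (fun t ht => ?_) μ
  exact (hK (α t) ⟨ht.1, fun h => ht.2 (Or.inr h)⟩ t rfl).trans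
    (measure_mono (evFle_mono le_rfl Set.subset_union_left))

/-- a DMC abstraction with a finite attractor whose preimage is an attractor,
together with uniform lower bounds on reachability from the attractor elements, yields
decisiveness of `T₁` w.r.t. every `α`-closed set, from every initial probability measure. -/
theorem statement_11 {S₁ S₂ : Type*} [MeasurableSpace S₁] [MeasurableSpace S₂]
    [Countable S₂] [MeasurableSingletonClass S₂]
    (κ₁ : Kernel S₁ S₁) [IsMarkovKernel κ₁] (κ₂ : Kernel S₂ S₂) [IsMarkovKernel κ₂]
    (P₁ : Measure S₁ → Measure (ℕ → S₁)) (hP₁ : IsPathMeasure κ₁ P₁)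
    (P₂ : Measure S₂ → Measure (ℕ → S₂)) (hP₂ : IsPathMeasure κ₂ P₂)
    (α : S₁ → S₂) (hα : Measurable α) (habs : IsAbstraction κ₁ κ₂ α)
    (A₂ : Set S₂) (hA₂fin : A₂.Finite)
    (hA₂attr : ∀ ν : Measure S₂, IsProbabilityMeasure ν → P₂ ν (evF A₂) = 1)
    (hA₁attr : ∀ μ : Measure S₁, IsProbabilityMeasure μ → P₁ μ (evF (α ⁻¹' A₂)) = 1)
    (hbound : ∀ s ∈ A₂, ∀ B : Set S₂, ∃ p : ℝ≥0∞, 0 < p ∧ ∃ k : ℕ,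
      (∀ μ : Measure S₁, IsProbabilityMeasure μ → μ (α ⁻¹' {s}) = 1 →
        p ≤ P₁ μ (evFle k (α ⁻¹' B))) ∨
      (∀ μ : Measure S₁, IsProbabilityMeasure μ → μ (α ⁻¹' {s}) = 1 →
        P₁ μ (evF (α ⁻¹' B)) = 0)) :
    ∀ B : Set S₂, ∀ μ : Measure S₁, IsProbabilityMeasure μ →
      Decisive P₁ μ (α ⁻¹' B) :=
  statement_11_general κ₁ P₁ hP₁ α hα A₂ hA₂fin hA₁attr hbound

end STS
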